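/- Let λ ∈ ℝ, α ∈ ℝ, and n ∈ ℕ with n ≥ 1. Then for every x ∈ ℝ: (d/dx) L^{(α)}_{n,λ}(x) = −Σ_{k=1}^{n} Σ_{l=1}^{k} x^{l−1}·λ^{l−1}·C(k−1, k−l)·L^{(α)}_{n−k,λ}(x), where C denotes the ordinary binomial coefficient. -/

import Mathlib

/-- The degenerate falling factorial `(1)_{m,λ} = ∏_{j=0}^{m-1} (1 - jλ)`. -/
noncomputable def degFall (lam : ℝ) (m : ℕ) : ℝ :=
  ∏ j ∈ Finset.range m, (1 - (j : ℝ) * lam)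

/-- Generalized binomial coefficient `binom(n+α, n−m) = (∏_{j=0}^{n−m−1} (n+α−j))/(n−m)!`. -/
noncomputable def genBinom (α : ℝ) (n m : ℕ) : ℝ :=
  (∏ j ∈ Finset.range (n - m), ((n : ℝ) + α - (j : ℝ))) / (Nat.factorial (n - m) : ℝ)

/-- The degenerate generalized Laguerre polynomial `L^{(α)}_{n,λ}(x)`. -/
noncomputable def degLaguerre (lam α : ℝ) (n : ℕ) (x : ℝ) : ℝ :=
  ∑ m ∈ Finset.range (n + 1),
    genBinom α n m * (-1 : ℝ) ^ m * degFall lam m * x ^ m / (Nat.factorial m : ℝ)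

/-!
By the binomial theorem the inner sum is `(1 + λx)^(k-1)`, so the identity says
`L'ₙ = -∑_{k<n} (1 + λx)^k L_{n-1-k}`. By induction on `n` this is equivalent to the recurrence
`L'_{n+1} = (1 + λx) L'ₙ - Lₙ`, which compares coefficients of `x^p`: it follows from Pascal's rule
`binom(n+1+α, n-p) = binom(n+α, n-p-1) + binom(n+α, n-p)` together with
`(1)_{p+1,λ} = (1 - pλ) (1)_{p,λ}`.
-/

open Finset Polynomial Nat

theorem sum_Icc_one_eq_sum_range {M : Type*} [AddCommMonoid M] (f : ℕ → M) (n : ℕ) :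
    ∑ k ∈ Icc 1 n, f k = ∑ k ∈ range n, f (k + 1) := by
  rw [range_eq_Ico, sum_Ico_add' f 0 n 1, ← Ico_add_one_right_eq_Icc]

theorem genBinom_self (α : ℝ) (n : ℕ) : genBinom α n n = 1 := by
  simp [genBinom]

theorem genBinom_succ_succ (α : ℝ) {n p : ℕ} (h : p < n) :
    genBinom α (n + 1) (p + 1) = genBinom α n (p + 1) + genBinom α n p := by
  obtain ⟨r, hr⟩ : ∃ r, n - p = r + 1 := ⟨n - p - 1, by omega⟩
  have hshift : ∏ j ∈ range r, (((n + 1 : ℕ) : ℝ) + α - ((j + 1 : ℕ) : ℝ)) =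
      ∏ j ∈ range r, ((n : ℝ) + α - j) :=
    prod_congr rfl fun j _ => by push_cast; ring
  unfold genBinom
  rw [show n + 1 - (p + 1) = r + 1 by omega, show n - (p + 1) = r by omega, hr, prod_range_succ',
    hshift, prod_range_succ (fun j : ℕ => (n : ℝ) + α - j) r, factorial_succ]
  push_cast
  field_simp
  ring

theorem degFall_succ (lam : ℝ) (m : ℕ) : degFall lam (m + 1) = degFall lam m * (1 - m * lam) :=
  prod_range_succ _ _

noncomputable def degLaguerrePoly (lam α : ℝ) (n : ℕ) : ℝ[X] :=
  ∑ m ∈ range (n + 1), C (genBinom α n m * ((-1) ^ m * degFall lam m / m !)) * X ^ m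

theorem eval_degLaguerrePoly (lam α : ℝ) (n : ℕ) (x : ℝ) :
    (degLaguerrePoly lam α n).eval x = degLaguerre lam α n x := by
  simp only [degLaguerrePoly, degLaguerre, eval_finsetSum, eval_mul, eval_C, eval_pow, eval_X]
  exact sum_congr rfl fun m _ => by ring

-- The cut-off `m ≤ n` matters: for `m > n` the truncated subtraction gives `genBinom α n m = 1`.
theorem coeff_degLaguerrePoly (lam α : ℝ) (n m : ℕ) :
    (degLaguerrePoly lam α n).coeff m =
      if m ≤ n then genBinom α n m * ((-1) ^ m * degFall lam m / m !) else 0 := by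
  simp only [degLaguerrePoly, finsetSum_coeff, coeff_C_mul_X_pow, sum_ite_eq, mem_range,
    Nat.lt_succ_iff]

theorem deriv_degLaguerre (lam α : ℝ) (n : ℕ) (x : ℝ) :
    deriv (degLaguerre lam α n) x = (derivative (degLaguerrePoly lam α n)).eval x := by
  rw [← Polynomial.deriv]
  simp only [eval_degLaguerrePoly]

theorem coeff_X_mul_derivative {R : Type*} [Semiring R] (q : R[X]) (p : ℕ) :
    (X * derivative q).coeff p = q.coeff p * p := by
  cases p <;> simp [coeff_derivative]

theorem derivative_degLaguerrePoly_succ (lam α : ℝ) (n : ℕ) :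
    derivative (degLaguerrePoly lam α (n + 1)) =
      (1 + C lam * X) * derivative (degLaguerrePoly lam α n) - degLaguerrePoly lam α n := by
  have hd (p : ℕ) : ((p : ℝ) + 1) * ((-1) ^ (p + 1) * degFall lam (p + 1) / (p + 1)!) =
      (lam * p - 1) * ((-1) ^ p * degFall lam p / p !) := by
    rw [degFall_succ, factorial_succ]
    push_cast
    field_simp
    ring
  ext p
  simp only [coeff_derivative, coeff_sub, add_mul, one_mul, mul_assoc, coeff_add, coeff_C_mul,
    coeff_X_mul_derivative, coeff_degLaguerrePoly]
  rcases lt_trichotomy p n with hp | rfl | hp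
  · rw [if_pos (Nat.succ_le_succ hp.le), if_pos (show p + 1 ≤ n from hp), if_pos hp.le,
      genBinom_succ_succ α hp]
    linear_combination genBinom α n p * hd p
  · rw [if_pos le_rfl, if_pos le_rfl, if_neg (Nat.not_succ_le_self p), genBinom_self,
      genBinom_self]
    linear_combination hd p
  · rw [if_neg (show ¬p + 1 ≤ n + 1 by omega), if_neg (show ¬p + 1 ≤ n by omega),
      if_neg hp.not_ge]
    ring

theorem deriv_degLaguerre_succ (lam α : ℝ) (n : ℕ) (x : ℝ) :
    deriv (degLaguerre lam α (n + 1)) x =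
      (1 + lam * x) * deriv (degLaguerre lam α n) x - degLaguerre lam α n x := by
  simp only [deriv_degLaguerre, derivative_degLaguerrePoly_succ, eval_sub, eval_mul, eval_add,
    eval_one, eval_C, eval_X, eval_degLaguerrePoly]

theorem deriv_degLaguerre_eq_neg_sum (lam α : ℝ) (n : ℕ) (x : ℝ) :
    deriv (degLaguerre lam α n) x =
      -∑ k ∈ range n, (1 + lam * x) ^ k * degLaguerre lam α (n - 1 - k) x := by
  induction n with
  | zero => simp [deriv_degLaguerre, degLaguerrePoly]
  | succ n ih =>
    rw [deriv_degLaguerre_succ, ih, sum_range_succ', mul_neg, mul_sum]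
    have hterm : ∀ k ∈ range n,
        (1 + lam * x) ^ (k + 1) * degLaguerre lam α (n + 1 - 1 - (k + 1)) x =
          (1 + lam * x) * ((1 + lam * x) ^ k * degLaguerre lam α (n - 1 - k) x) := fun k _ => by
      rw [show n + 1 - 1 - (k + 1) = n - 1 - k by omega, pow_succ]
      ring
    rw [sum_congr rfl hterm, Nat.add_sub_cancel, Nat.sub_zero, pow_zero, one_mul]
    ring

theorem sum_Icc_pow_mul_choose {R : Type*} [CommSemiring R] (a : R) (k : ℕ) :
    ∑ l ∈ Icc 1 (k + 1), a ^ (l - 1) * (k.choose (k + 1 - l) : R) = (1 + a) ^ k := by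
  rw [sum_Icc_one_eq_sum_range, add_comm 1 a, add_pow]
  refine sum_congr rfl fun i hi => ?_
  rw [Nat.add_sub_cancel, Nat.add_sub_add_right, choose_symm (by simpa [Nat.lt_succ_iff] using hi),
    one_pow, mul_one]

theorem degLaguerre_deriv_sum_general (lam α : ℝ) (n : ℕ) (x : ℝ) :
    deriv (degLaguerre lam α n) x =
      -∑ k ∈ Finset.Icc 1 n, ∑ l ∈ Finset.Icc 1 k,
        x ^ (l - 1) * lam ^ (l - 1) * (Nat.choose (k - 1) (k - l) : ℝ) *
          degLaguerre lam α (n - k) x := by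
  rw [deriv_degLaguerre_eq_neg_sum, sum_Icc_one_eq_sum_range]
  congr 1
  refine sum_congr rfl fun k _ => ?_
  simp only [← sum_mul, ← mul_pow, Nat.add_sub_cancel, sum_Icc_pow_mul_choose, mul_comm lam x]
  congr 2
  omega

/-- Corollary 7, second identity:
`(d/dx) L^{(α)}_{n,λ}(x) = −∑_{k=1}^n ∑_{l=1}^k x^{l−1} λ^{l−1} C(k−1,k−l) L^{(α)}_{n−k,λ}(x)`
for `n ≥ 1`. -/
theorem degLaguerre_deriv_sum (lam α : ℝ) (n : ℕ) (hn : 1 ≤ n) (x : ℝ) :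
    deriv (degLaguerre lam α n) x =
      -∑ k ∈ Finset.Icc 1 n, ∑ l ∈ Finset.Icc 1 k,
        x ^ (l - 1) * lam ^ (l - 1) * (Nat.choose (k - 1) (k - l) : ℝ) *
          degLaguerre lam α (n - k) x :=
  degLaguerre_deriv_sum_general lam α n x
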